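/- Fix g > 0, q ≥ 1 and suppose 0 < z < g_c. Then f_z(Σ) > 0 for all Σ ≥ Σ_z, φ_A is strictly increasing and φ_B strictly decreasing on [Σ_z, ∞) with φ_A(Σ_z) = φ_B(Σ_z) = 0, so that the single-valued inverse Σ(φ) (equal to φ_A^{−1}(φ) for φ ≥ 0 and φ_B^{−1}(φ) for φ ≤ 0) exists on all of ℝ, and the function (c₁ − c₂)(Σ(φ)) := √(Σ(φ)² − 4e^{−(g+z)Σ(φ)}) for φ ≥ 0 and −√(Σ(φ)² − 4e^{−(g+z)Σ(φ)}) for φ ≤ 0 is monotone increasing in φ ∈ ℝ and satisfies (c₁ − c₂)(Σ(φ)) → ±∞ as φ → ±∞. -/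

import Mathlib

open Set Filter

/-- The critical total concentration Σ_z: the unique positive solution of
Σ = 2·e^{−(g+z)Σ/2} (equivalently Σ² = 4·e^{−(g+z)Σ}). -/
noncomputable def sigmaZ (g z : ℝ) : ℝ :=
  sInf {S : ℝ | 0 < S ∧ S = 2 * Real.exp (-((g + z) * S) / 2)}

/-- f_z(Σ) = (1 + gΣ)·e^{(g+z)Σ} + g² − z². -/
noncomputable def fz (g z S : ℝ) : ℝ :=
  (1 + g * S) * Real.exp ((g + z) * S) + g ^ 2 - z ^ 2

/-- g_c = inf { z > √(1+g²) : ∃ Σ > Σ_z with f_z(Σ) = 0 }. -/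
noncomputable def gcConst (g : ℝ) : ℝ :=
  sInf {z : ℝ | Real.sqrt (1 + g ^ 2) < z ∧ ∃ S : ℝ, sigmaZ g z < S ∧ fz g z S = 0}

/-- The potential φ_A along branch A of the two-species system. -/
noncomputable def phiA (g z q S : ℝ) : ℝ :=
  (Real.log ((S + Real.sqrt (S ^ 2 - 4 * Real.exp (-((g + z) * S)))) / 2)
    + (g + z) / 2 * S
    + (g - z) / 2 * Real.sqrt (S ^ 2 - 4 * Real.exp (-((g + z) * S)))) / q

/-- The potential φ_B along branch B of the two-species system. -/
noncomputable def phiB (g z q S : ℝ) : ℝ :=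
  (Real.log ((S - Real.sqrt (S ^ 2 - 4 * Real.exp (-((g + z) * S)))) / 2)
    + (g + z) / 2 * S
    + (z - g) / 2 * Real.sqrt (S ^ 2 - 4 * Real.exp (-((g + z) * S)))) / q

/-!
With `a = g + z`, `discr g z Σ = Σ² − 4e^{−aΣ}` and `c₁,₂ = (Σ ± √discr)/2` one has `c₁ + c₂ = Σ`,
`c₁c₂ = e^{−aΣ}`, `q φ_A = log c₁ + g c₁ + z c₂` and `q φ_B = log c₂ + g c₂ + z c₁`. Hence
`φ_A + φ_B = 0` and `q φ_A' = f_z e^{−aΣ} / √discr`, so everything rests on `f_z > 0` on `[Σ_z, ∞)`,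
i.e. (as `f_z` increases) on `f_z(Σ_z) > 0`.

The fixed-point equation gives `Σ_z² f_z(Σ_z) = (2 + aΣ_z)(2 − (z − g)Σ_z)`, and `u = aΣ_z/2` solves
`u e^u = a`, so `u` increases with `z`; this makes the condition `Σ_z (z − g) ≥ 2` persist as `z` grows.
Were it true at `z`, every `z' > z` would have `f_{z'}(Σ_{z'}) < 0`, hence (as `f_{z'} → ∞`) a zero
beyond `Σ_{z'}`, and `g_c ≤ z` would follow.

The inverse is taken as `Σ(φ) = φ_A⁻¹(|φ|)`; then `(c₁ − c₂)(Σ(φ))` is the odd extension of the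
increasing, unbounded function `√discr ∘ φ_A⁻¹` on `[0, ∞)`.
-/

open Real

section Threshold

variable {g z S : ℝ}

lemma strictMono_sub_two_exp {a : ℝ} (ha : 0 ≤ a) :
    StrictMono fun S : ℝ => S - 2 * exp (-(a * S) / 2) := by
  intro x y hxy
  have : exp (-(a * y) / 2) ≤ exp (-(a * x) / 2) := exp_le_exp.2 (by nlinarith)
  dsimp only
  linarith

lemma sigmaZ_spec (h : 0 < g + z) :
    sigmaZ g z ∈ Ioo 0 2 ∧ sigmaZ g z = 2 * exp (-((g + z) * sigmaZ g z) / 2) := by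
  have hF := strictMono_sub_two_exp h.le
  obtain ⟨c, hc, hFc⟩ : ∃ c ∈ Ioo (0 : ℝ) 2, c - 2 * exp (-((g + z) * c) / 2) = 0 := by
    have h2 : exp (-((g + z) * 2) / 2) < 1 := exp_lt_one_iff.2 (by linarith)
    refine intermediate_value_Ioo zero_le_two (by fun_prop) ⟨?_, ?_⟩
    · norm_num
    · linarith
  have hfix := sub_eq_zero.1 hFc
  have hset : {S : ℝ | 0 < S ∧ S = 2 * exp (-((g + z) * S) / 2)} = {c} := by
    ext S
    refine ⟨fun hS => hF.injective ?_, fun hS => ⟨hS ▸ hc.1, hS ▸ hfix⟩⟩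
    linarith [hS.2]
  rw [sigmaZ, hset, csInf_singleton]
  exact ⟨hc, hfix⟩

lemma sigmaZ_pos (h : 0 < g + z) : 0 < sigmaZ g z := (sigmaZ_spec h).1.1

lemma sigmaZ_le_iff (h : 0 < g + z) :
    sigmaZ g z ≤ S ↔ 2 * exp (-((g + z) * S) / 2) ≤ S := by
  rw [← (strictMono_sub_two_exp h.le).le_iff_le, ← (sigmaZ_spec h).2, sub_self, sub_nonneg]

lemma sigmaZ_lt_iff (h : 0 < g + z) :
    sigmaZ g z < S ↔ 2 * exp (-((g + z) * S) / 2) < S := by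
  rw [← (strictMono_sub_two_exp h.le).lt_iff_lt, ← (sigmaZ_spec h).2, sub_self, sub_pos]

lemma sigmaZ_mul_exp (h : 0 < g + z) :
    sigmaZ g z * exp ((g + z) * sigmaZ g z / 2) = 2 := by
  nth_rw 1 [(sigmaZ_spec h).2]
  rw [mul_assoc, ← exp_add, neg_div, neg_add_cancel, exp_zero, mul_one]

end Threshold

noncomputable def discr (g z S : ℝ) : ℝ := S ^ 2 - 4 * exp (-((g + z) * S))

section Discriminant

variable {g z S : ℝ}

lemma discr_eq_mul (g z S : ℝ) : discr g z S =
    (S - 2 * exp (-((g + z) * S) / 2)) * (S + 2 * exp (-((g + z) * S) / 2)) := by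
  have : exp (-((g + z) * S) / 2) ^ 2 = exp (-((g + z) * S)) := by
    rw [← exp_nat_mul]
    ring_nf
  rw [discr]
  linear_combination 4 * this

lemma discr_sigmaZ (h : 0 < g + z) : discr g z (sigmaZ g z) = 0 := by
  rw [discr_eq_mul, ← (sigmaZ_spec h).2, sub_self, zero_mul]

lemma discr_nonneg (h : 0 < g + z) (hS : sigmaZ g z ≤ S) : 0 ≤ discr g z S := by
  rw [discr_eq_mul]
  exact mul_nonneg (sub_nonneg.2 ((sigmaZ_le_iff h).1 hS))
    (by linarith [sigmaZ_pos h, exp_pos (-((g + z) * S) / 2)])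

lemma discr_pos (h : 0 < g + z) (hS : sigmaZ g z < S) : 0 < discr g z S := by
  rw [discr_eq_mul]
  exact mul_pos (sub_pos.2 ((sigmaZ_lt_iff h).1 hS))
    (by linarith [sigmaZ_pos h, exp_pos (-((g + z) * S) / 2)])

lemma sqrt_discr_lt_self (hS : 0 < S) : √(discr g z S) < S :=
  (sqrt_lt' hS).2 (by rw [discr]; linarith [exp_pos (-((g + z) * S))])

lemma monotoneOn_sqrt_discr (h : 0 ≤ g + z) : MonotoneOn (fun S => √(discr g z S)) (Ici 0) := by
  intro x hx y hy hxy
  have : exp (-((g + z) * y)) ≤ exp (-((g + z) * x)) := exp_le_exp.2 (by nlinarith)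
  exact sqrt_le_sqrt (by rw [discr, discr]; nlinarith [mem_Ici.1 hx])

lemma tendsto_sqrt_discr_atTop (h : 0 ≤ g + z) :
    Tendsto (fun S => √(discr g z S)) atTop atTop := by
  refine tendsto_sqrt_atTop.comp (tendsto_atTop_mono' _ ?_
    (tendsto_atTop_add_const_right _ (-4) (tendsto_pow_atTop two_ne_zero)))
  filter_upwards [eventually_ge_atTop 0] with S hS
  have : exp (-((g + z) * S)) ≤ 1 := exp_le_one_iff.2 (by nlinarith)
  rw [discr]
  linarith

lemma hasDerivAt_discr (g z S : ℝ) :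
    HasDerivAt (discr g z) (2 * S + 4 * (g + z) * exp (-((g + z) * S))) S := by
  have hlin : HasDerivAt (fun S => -((g + z) * S)) (-(g + z)) S := by
    simpa using ((hasDerivAt_id' S).const_mul (g + z)).fun_neg
  exact ((hasDerivAt_pow 2 S).sub (hlin.exp.const_mul 4)).congr_deriv (by push_cast; ring)

end Discriminant

section Critical

variable {g z z' S₀ : ℝ}

lemma monotoneOn_fz (hg : 0 ≤ g) (h : 0 ≤ g + z) : MonotoneOn (fz g z) (Ici 0) := by
  intro x hx y hy hxy
  have := mul_le_mul (by nlinarith : 1 + g * x ≤ 1 + g * y)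
    (exp_le_exp.2 (by nlinarith : (g + z) * x ≤ (g + z) * y)) (exp_pos _).le
    (by nlinarith [mem_Ici.1 hy])
  rw [fz, fz]
  linarith

lemma sq_sigmaZ_mul_fz (h : 0 < g + z) : sigmaZ g z ^ 2 * fz g z (sigmaZ g z) =
    (2 + (g + z) * sigmaZ g z) * (2 - (z - g) * sigmaZ g z) := by
  have hE : sigmaZ g z ^ 2 * exp ((g + z) * sigmaZ g z) = 4 := by
    calc sigmaZ g z ^ 2 * exp ((g + z) * sigmaZ g z)
        = (sigmaZ g z * exp ((g + z) * sigmaZ g z / 2)) ^ 2 := by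
          rw [mul_pow, ← exp_nat_mul]
          ring_nf
      _ = 4 := by rw [sigmaZ_mul_exp h]; norm_num
  rw [fz]
  linear_combination (1 + g * sigmaZ g z) * hE


lemma mul_sigmaZ_lt_mul_sigmaZ (h : 0 < g + z) (hzz' : z < z') :
    (g + z) * sigmaZ g z < (g + z') * sigmaZ g z' := by
  have key : ∀ {w : ℝ}, 0 < g + w →
      (g + w) * sigmaZ g w / 2 * exp ((g + w) * sigmaZ g w / 2) = g + w := fun {w} h => by
    linear_combination (g + w) / 2 * sigmaZ_mul_exp h
  by_contra! hle
  have h' : 0 < g + z' := by linarith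
  have hu' : 0 ≤ (g + z') * sigmaZ g z' / 2 := by have := sigmaZ_pos h'; positivity
  have := mul_le_mul (div_le_div_of_nonneg_right hle zero_le_two)
    (exp_le_exp.2 (div_le_div_of_nonneg_right hle zero_le_two)) (exp_pos _).le
    (hu'.trans (div_le_div_of_nonneg_right hle zero_le_two))
  rw [key h, key h'] at this
  linarith

lemma two_lt_sigmaZ_mul_of_le (hg : 0 ≤ g) (h : 0 < g + z)
    (hz : 2 ≤ sigmaZ g z * (z - g)) (hzz' : z < z') : 2 < sigmaZ g z' * (z' - g) := by
  have hs := sigmaZ_pos h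
  have hmono := mul_sigmaZ_lt_mul_sigmaZ h hzz'
  have hzg : 0 < z - g := pos_of_mul_pos_right (by linarith) hs.le
  have hu : 2 ≤ (g + z) * sigmaZ g z := by nlinarith
  have : 2 * (g + z') < (g + z') * sigmaZ g z' * (z' - g) := by
    nlinarith [mul_lt_mul_of_pos_right hmono (show 0 < z' - g by linarith)]
  nlinarith

lemma exists_fz_eq_zero_of_neg (hg : 0 ≤ g) (h : 0 < g + z) (hS₀ : 0 ≤ S₀)
    (hneg : fz g z S₀ < 0) : ∃ S, S₀ < S ∧ fz g z S = 0 := by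
  set b := max S₀ (z ^ 2 / (g + z))
  have hb : z ^ 2 ≤ (g + z) * b := by
    rw [← div_le_iff₀' h]
    exact le_max_right _ _
  have hpos : 0 < fz g z b := by
    have h1 := add_one_le_exp ((g + z) * b)
    have h2 := le_mul_of_one_le_left (exp_pos ((g + z) * b)).le
      (by nlinarith [le_max_left S₀ (z ^ 2 / (g + z))] : 1 ≤ 1 + g * b)
    rw [fz]
    nlinarith
  obtain ⟨S, hS, hfS⟩ := intermediate_value_Icc (le_max_left _ _)
    (by unfold fz; fun_prop : ContinuousOn (fz g z) (Icc S₀ b)) ⟨hneg.le, hpos.le⟩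
  exact ⟨S, hS.1.lt_of_ne (by rintro rfl; linarith), hfS⟩

lemma mem_of_two_le_sigmaZ_mul (hg : 0 ≤ g) (h : 0 < g + z)
    (hz : 2 ≤ sigmaZ g z * (z - g)) (hzz' : z < z') :
    √(1 + g ^ 2) < z' ∧ ∃ S, sigmaZ g z' < S ∧ fz g z' S = 0 := by
  obtain ⟨⟨hs, hs2⟩, -⟩ := sigmaZ_spec h
  have h' : 0 < g + z' := by linarith
  have hs' := sigmaZ_pos h'
  have hzg : 1 < z - g := by nlinarith
  refine ⟨(sqrt_lt' (by linarith)).2 (by nlinarith), exists_fz_eq_zero_of_neg hg h' hs'.le ?_⟩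
  have := two_lt_sigmaZ_mul_of_le hg h hz hzz'
  refine neg_of_mul_neg_right (a := sigmaZ g z' ^ 2) ?_ (sq_nonneg _)
  rw [sq_sigmaZ_mul_fz h']
  exact mul_neg_of_pos_of_neg (by positivity) (by linarith)

lemma fz_sigmaZ_pos (hg : 0 ≤ g) (h : 0 < g + z) (hzc : z < gcConst g) :
    0 < fz g z (sigmaZ g z) := by
  by_contra! hle
  have hs := sigmaZ_pos h
  have hz : 2 ≤ sigmaZ g z * (z - g) := by
    have := mul_nonpos_of_nonneg_of_nonpos (sq_nonneg (sigmaZ g z)) hle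
    rw [sq_sigmaZ_mul_fz h] at this
    nlinarith [nonpos_of_mul_nonpos_right this (by positivity)]
  have hbdd : BddBelow {z : ℝ | √(1 + g ^ 2) < z ∧ ∃ S, sigmaZ g z < S ∧ fz g z S = 0} :=
    ⟨0, fun _ hx => (sqrt_nonneg _).trans hx.1.le⟩
  have := csInf_le hbdd (mem_of_two_le_sigmaZ_mul hg h hz (by linarith : z < (z + gcConst g) / 2))
  rw [← gcConst] at this
  linarith

lemma fz_pos (hg : 0 ≤ g) (h : 0 < g + z) (hzc : z < gcConst g) {S : ℝ}
    (hS : sigmaZ g z ≤ S) : 0 < fz g z S :=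
  (fz_sigmaZ_pos hg h hzc).trans_le <| monotoneOn_fz hg h.le (sigmaZ_pos h).le
    ((sigmaZ_pos h).le.trans hS) hS

end Critical

section Potentials

variable {g z q S : ℝ}

lemma phiA_sigmaZ (h : 0 < g + z) : phiA g z q (sigmaZ g z) = 0 := by
  have hd : sigmaZ g z ^ 2 - 4 * exp (-((g + z) * sigmaZ g z)) = 0 := discr_sigmaZ h
  have hhalf : sigmaZ g z / 2 = exp (-((g + z) * sigmaZ g z) / 2) := by
    linarith [(sigmaZ_spec h).2]
  rw [phiA, hd, sqrt_zero, add_zero, hhalf, log_exp, mul_zero, add_zero]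
  ring

lemma phiB_eq_neg_phiA (h : 0 < g + z) (hS : sigmaZ g z ≤ S) :
    phiB g z q S = -phiA g z q S := by
  have hSpos := (sigmaZ_pos h).trans_le hS
  set R := √(discr g z S) with hR
  have hR2 : R ^ 2 = S ^ 2 - 4 * exp (-((g + z) * S)) := sq_sqrt (discr_nonneg h hS)
  have hRS : R < S := sqrt_discr_lt_self hSpos
  have hR0 : 0 ≤ R := sqrt_nonneg _
  have hprod : (S + R) / 2 * ((S - R) / 2) = exp (-((g + z) * S)) := by
    linear_combination -hR2 / 4
  have hlog := log_mul (by linarith : (S + R) / 2 ≠ 0) (by linarith : (S - R) / 2 ≠ 0)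
  rw [hprod, log_exp] at hlog
  rw [phiB, phiA, ← discr, ← hR,
    show log ((S - R) / 2) = -((g + z) * S) - log ((S + R) / 2) by linarith]
  ring

lemma phiB_sigmaZ (h : 0 < g + z) : phiB g z q (sigmaZ g z) = 0 := by
  rw [phiB_eq_neg_phiA h le_rfl, phiA_sigmaZ h, neg_zero]

lemma continuousOn_phiA (h : 0 < g + z) : ContinuousOn (phiA g z q) (Ici (sigmaZ g z)) := by
  refine ContinuousOn.div_const (ContinuousOn.add (ContinuousOn.add ?_ (by fun_prop))
    (by fun_prop)) q
  refine ContinuousOn.log (by fun_prop) fun S hS => ?_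
  have := (sigmaZ_pos h).trans_le hS
  positivity

lemma hasDerivAt_phiA (h : 0 < g + z) (hS : sigmaZ g z < S) :
    HasDerivAt (phiA g z q)
      (fz g z S * exp (-((g + z) * S)) / (√(discr g z S) * q)) S := by
  have hSpos := (sigmaZ_pos h).trans hS
  have hR := (hasDerivAt_discr g z S).sqrt (discr_pos h hS).ne'
  have hlog := (((hasDerivAt_id' S).fun_add hR).div_const 2).log
    (by linarith [sqrt_nonneg (discr g z S)] : (S + √(discr g z S)) / 2 ≠ 0)
  have hlin : HasDerivAt (fun S => (g + z) / 2 * S) ((g + z) / 2) S := by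
    simpa using (hasDerivAt_id' S).const_mul ((g + z) / 2)
  set E := exp (-((g + z) * S))
  set R := √(discr g z S)
  have hR0 : 0 < R := sqrt_pos.2 (discr_pos h hS)
  have hR2 : R ^ 2 = S ^ 2 - 4 * E := sq_sqrt (discr_pos h hS).le
  have hSR : S + R ≠ 0 := by positivity
  refine (((hlog.add hlin).add (hR.const_mul ((g - z) / 2))).div_const q).congr_deriv ?_
  have hfz : fz g z S * E = 1 + g * S + (g ^ 2 - z ^ 2) * E := by
    have : exp ((g + z) * S) * E = 1 := by rw [← exp_add, add_neg_cancel, exp_zero]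
    rw [fz]
    linear_combination (1 + g * S) * this
  rw [hfz, show E = (S ^ 2 - R ^ 2) / 4 by linarith]
  field_simp
  ring

lemma strictMonoOn_phiA (hg : 0 ≤ g) (h : 0 < g + z) (hq : 0 < q) (hzc : z < gcConst g) :
    StrictMonoOn (phiA g z q) (Ici (sigmaZ g z)) := by
  refine strictMonoOn_of_deriv_pos (convex_Ici _) (continuousOn_phiA h) fun S hS => ?_
  rw [interior_Ici] at hS
  rw [(hasDerivAt_phiA h hS).deriv]
  exact div_pos (mul_pos (fz_pos hg h hzc hS.le) (exp_pos _))
    (mul_pos (sqrt_pos.2 (discr_pos h hS)) hq)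

lemma strictAntiOn_phiB (hg : 0 ≤ g) (h : 0 < g + z) (hq : 0 < q) (hzc : z < gcConst g) :
    StrictAntiOn (phiB g z q) (Ici (sigmaZ g z)) := fun x hx y hy hxy => by
  rw [phiB_eq_neg_phiA h hx, phiB_eq_neg_phiA h hy, neg_lt_neg_iff]
  exact strictMonoOn_phiA hg h hq hzc hx hy hxy

lemma div_le_phiA (hg : 0 ≤ g) (hz : 0 ≤ z) (hq : 0 < q) (hS : 2 ≤ S) :
    g * S / 2 / q ≤ phiA g z q S := by
  have hR0 : 0 ≤ √(discr g z S) := sqrt_nonneg _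
  have hRS : √(discr g z S) < S := sqrt_discr_lt_self (by linarith)
  have hlog : 0 ≤ log ((S + √(discr g z S)) / 2) := log_nonneg (by linarith)
  rw [phiA, ← discr]
  refine div_le_div_of_nonneg_right ?_ hq.le
  nlinarith

lemma tendsto_phiA_atTop (hg : 0 < g) (hz : 0 ≤ z) (hq : 0 < q) :
    Tendsto (phiA g z q) atTop atTop := by
  refine tendsto_atTop_mono' _ ?_ (((tendsto_id.const_mul_atTop hg).atTop_div_const
    two_pos).atTop_div_const hq)
  filter_upwards [eventually_ge_atTop 2] with S hS
  exact div_le_phiA hg.le hz hq hS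

lemma surjOn_phiA (hg : 0 < g) (hz : 0 ≤ z) (hq : 0 < q) :
    SurjOn (phiA g z q) (Ici (sigmaZ g z)) (Ici 0) := by
  have h := add_pos_of_pos_of_nonneg hg hz
  have := intermediate_value_Ici (continuousOn_phiA h) (tendsto_phiA_atTop hg hz hq)
  rwa [phiA_sigmaZ h] at this

end Potentials

lemma tendsto_atTop_of_rightInvOn_Ici {α β : Type*} [LinearOrder α] [Preorder β]
    {f : α → β} {u : β → α} {a : α} {t : Set β} (hf : StrictMonoOn f (Ici a))
    (hu : MapsTo u t (Ici a)) (hfu : RightInvOn u f t) (ht : t ∈ atTop) :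
    Tendsto u atTop atTop := by
  refine tendsto_atTop.2 fun C => ?_
  filter_upwards [ht, eventually_ge_atTop (f (max C a))] with y hy hfy
  rw [← hfu.eq hy, hf.le_iff_le (le_max_right C a) (hu hy)] at hfy
  exact (le_max_left C a).trans hfy

lemma monotone_tendsto_of_odd_extension {F D : ℝ → ℝ} (hF : MonotoneOn F (Ici 0))
    (hFtop : Tendsto F atTop atTop) (hpos : ∀ φ, 0 ≤ φ → D φ = F φ)
    (hneg : ∀ φ, φ ≤ 0 → D φ = -F (-φ)) :
    Monotone D ∧ Tendsto D atTop atTop ∧ Tendsto D atBot atBot := by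
  refine ⟨MonotoneOn.Iic_union_Ici (a := 0) (fun x hx y hy hxy => ?_) fun x hx y hy hxy => ?_,
    hFtop.congr' ?_, (tendsto_neg_atTop_atBot.comp (hFtop.comp tendsto_neg_atBot_atTop)).congr' ?_⟩
  · rw [hneg x hx, hneg y hy, neg_le_neg_iff]
    exact hF (mem_Ici.2 (neg_nonneg.2 hy)) (mem_Ici.2 (neg_nonneg.2 hx)) (neg_le_neg hxy)
  · rw [hpos x hx, hpos y hy]
    exact hF hx hy hxy
  · filter_upwards [eventually_ge_atTop 0] with φ hφ
    exact (hpos φ hφ).symm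
  · filter_upwards [eventually_le_atBot 0] with φ hφ
    exact (hneg φ hφ).symm

/-- for 0 < z < g_c, f_z(Σ) > 0 for all Σ ≥ Σ_z, φ_A is strictly
increasing and φ_B strictly decreasing on [Σ_z,∞) with φ_A(Σ_z) = φ_B(Σ_z) = 0, the
single-valued inverse Σ(φ) exists on all of ℝ, and the associated function
(c₁ − c₂)(Σ(φ)) is monotone increasing with (c₁−c₂)(Σ(φ)) → ±∞ as φ → ±∞. -/
theorem stmt_12 (g z q : ℝ) (hg : 0 < g) (hq : 1 ≤ q) (hz0 : 0 < z) (hz : z < gcConst g) :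
    (∀ S : ℝ, sigmaZ g z ≤ S → 0 < fz g z S) ∧
    StrictMonoOn (phiA g z q) (Ici (sigmaZ g z)) ∧
    StrictAntiOn (phiB g z q) (Ici (sigmaZ g z)) ∧
    phiA g z q (sigmaZ g z) = 0 ∧ phiB g z q (sigmaZ g z) = 0 ∧
    ∃ S : ℝ → ℝ,
      (∀ φ : ℝ, sigmaZ g z ≤ S φ) ∧
      (∀ φ : ℝ, 0 ≤ φ → phiA g z q (S φ) = φ) ∧
      (∀ φ : ℝ, φ ≤ 0 → phiB g z q (S φ) = φ) ∧
      ∀ D : ℝ → ℝ,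
        (∀ φ : ℝ, 0 ≤ φ → D φ = Real.sqrt ((S φ) ^ 2 - 4 * Real.exp (-((g + z) * S φ)))) →
        (∀ φ : ℝ, φ ≤ 0 → D φ = -Real.sqrt ((S φ) ^ 2 - 4 * Real.exp (-((g + z) * S φ)))) →
        Monotone D ∧ Tendsto D atTop atTop ∧ Tendsto D atBot atBot := by
  have h : 0 < g + z := add_pos hg hz0
  have hq0 : 0 < q := by linarith
  have hA := strictMonoOn_phiA hg.le h hq0 hz
  have hsurj := surjOn_phiA hg hz0.le hq0
  set u := Function.invFunOn (phiA g z q) (Ici (sigmaZ g z))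
  have hmaps : MapsTo u (Ici 0) (Ici (sigmaZ g z)) := hsurj.mapsTo_invFunOn
  have hinv : RightInvOn u (phiA g z q) (Ici 0) := hsurj.rightInvOn_invFunOn
  refine ⟨fun S => fz_pos hg.le h hz, hA, strictAntiOn_phiB hg.le h hq0 hz, phiA_sigmaZ h,
    phiB_sigmaZ h, fun φ => u |φ|, fun φ => hmaps (abs_nonneg φ), fun φ hφ => ?_,
    fun φ hφ => ?_, fun D hpos hneg => ?_⟩
  · simp only [abs_of_nonneg hφ, hinv.eq hφ]
  · dsimp only
    rw [phiB_eq_neg_phiA h (hmaps (abs_nonneg φ)), hinv.eq (abs_nonneg φ), abs_of_nonpos hφ,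
      neg_neg]
  set F := fun φ => √(discr g z (u φ))
  have hF : MonotoneOn F (Ici 0) :=
    ((monotoneOn_sqrt_discr h.le).mono (Ici_subset_Ici.2 (sigmaZ_pos h).le)).comp
      (Function.monotoneOn_of_rightInvOn_of_mapsTo hA.monotoneOn hinv hmaps) hmaps
  have hFtop : Tendsto F atTop atTop := (tendsto_sqrt_discr_atTop h.le).comp
    (tendsto_atTop_of_rightInvOn_Ici hA hmaps hinv (Ici_mem_atTop 0))
  refine monotone_tendsto_of_odd_extension hF hFtop (fun φ hφ => ?_) fun φ hφ => ?_
  · simp only [hpos φ hφ, abs_of_nonneg hφ, F, discr]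
  · simp only [hneg φ hφ, abs_of_nonpos hφ, F, discr]
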